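/- Order-sharp width of the intersection for q ≤ p₁: if 1 ≤ q ≤ p₁ < p₀ ≤ ∞, 1 ≤ k ≤ m, ν = k^{1/p₁-1/p₀}, and 0 ≤ n ≤ m/2, then d_n(B_{p₀}^m ∩ νB_{p₁}^m, ℓ_q^m) is bounded above and below, up to constants depending only on p₀, p₁, q, by k^{1/p₁ - 1/p₀} m^{1/q - 1/p₁}. -/

import Mathlib

open scoped ENNReal BigOperators Pointwise

/-- The `l_p` norm on `ℝ^m`, for `p ∈ [1, ∞]` (`p = ∞` gives the max norm). -/
noncomputable def pNorm {m : ℕ} (p : ℝ≥0∞) (x : Fin m → ℝ) : ℝ :=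
  if p = ∞ then ⨆ i, |x i| else (∑ i, |x i| ^ p.toReal) ^ (1 / p.toReal)

/-- The closed unit ball of `l_p^m`. -/
noncomputable def pBall (m : ℕ) (p : ℝ≥0∞) : Set (Fin m → ℝ) :=
  {x | pNorm p x ≤ 1}

/-- The Kolmogorov `n`-width of `M ⊆ ℝ^m` in `l_q^m`. -/
noncomputable def kolWidth {m : ℕ} (q : ℝ≥0∞) (n : ℕ) (M : Set (Fin m → ℝ)) : ℝ :=
  ⨅ L : {L : Submodule ℝ (Fin m → ℝ) // Module.finrank ℝ L ≤ n},
    ⨆ x : M, ⨅ y : (L : Submodule ℝ (Fin m → ℝ)), pNorm q ((x : Fin m → ℝ) - (y : Fin m → ℝ))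


/-!
For the upper bound, the intersection lies in `ν • B_{p₁}`, on which the `ℓ_q`-norm is at most
`ν m^{1/q - 1/p₁}` by the power mean inequality; the zero subspace already achieves this.

For the lower bound, `ν ≤ m^{1/p₁ - 1/p₀}` makes the cube `ν m^{-1/p₁} • B_∞` a subset of the
intersection, and a subspace `L` of dimension `n ≤ m/2` cannot approximate a cube `c • B_∞` in
`ℓ_q` better than `c m^{1/q} / 2`. Indeed the annihilator of `L` has dimension at least `m/2`, and
any subspace of dimension `d` contains a vector `z` with `‖z‖_∞ ≤ 1` and at least `d` coordinates
equal to `±1`: starting from `0`, move inside the subspace along a direction vanishing on the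
coordinates already at `±1` until, by the intermediate value theorem, one more coordinate reaches
`±1`. Pairing with `z` shows that the vertex `c • sign z` is at `ℓ₁`-distance at least `c m / 2`
from `L`, hence at `ℓ_q`-distance at least `c m^{1/q} / 2`.
-/

open Finset Module

section pNorm

variable {m : ℕ}

lemma pNorm_top (x : Fin m → ℝ) : pNorm ∞ x = ⨆ i, |x i| := if_pos rfl

lemma pNorm_of_ne_top {p : ℝ≥0∞} (hp : p ≠ ∞) (x : Fin m → ℝ) :
    pNorm p x = (∑ i, |x i| ^ p.toReal) ^ (1 / p.toReal) := if_neg hp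

lemma pNorm_nonneg (p : ℝ≥0∞) (x : Fin m → ℝ) : 0 ≤ pNorm p x := by
  unfold pNorm
  split_ifs
  · exact Real.iSup_nonneg fun i => abs_nonneg _
  · positivity

lemma mem_pBall_top {x : Fin m → ℝ} : x ∈ pBall m ∞ ↔ ∀ i, |x i| ≤ 1 := by
  simp only [pBall, Set.mem_ofPred_eq, pNorm_top]
  exact ⟨fun h i => (le_ciSup (Set.finite_range _).bddAbove i).trans h,
    fun h => Real.iSup_le h zero_le_one⟩

lemma pNorm_smul {p : ℝ≥0∞} (hp : p ≠ 0) (c : ℝ) (x : Fin m → ℝ) :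
    pNorm p (c • x) = |c| * pNorm p x := by
  by_cases hp_top : p = ∞
  · simp only [hp_top, pNorm_top, Pi.smul_apply, smul_eq_mul, abs_mul]
    exact (Real.mul_iSup_of_nonneg (abs_nonneg c) _).symm
  · have hp_pos : 0 < p.toReal := ENNReal.toReal_pos hp hp_top
    simp only [pNorm_of_ne_top hp_top, Pi.smul_apply, smul_eq_mul, abs_mul,
      Real.mul_rpow (abs_nonneg c) (abs_nonneg _), ← mul_sum]
    rw [Real.mul_rpow (by positivity) (by positivity), ← Real.rpow_mul (abs_nonneg c),
      mul_one_div_cancel hp_pos.ne', Real.rpow_one]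

lemma pNorm_le_of_forall_abs_le {p : ℝ≥0∞} (hp : p ≠ 0) {c : ℝ} (hc : 0 ≤ c) {x : Fin m → ℝ}
    (hx : ∀ i, |x i| ≤ c) : pNorm p x ≤ c * (m : ℝ) ^ (1 / p.toReal) := by
  by_cases hp_top : p = ∞
  · simpa [hp_top, pNorm_top] using Real.iSup_le hx hc
  · have hp_pos : 0 < p.toReal := ENNReal.toReal_pos hp hp_top
    calc pNorm p x ≤ (∑ _i : Fin m, c ^ p.toReal) ^ (1 / p.toReal) := by
          rw [pNorm_of_ne_top hp_top]
          gcongr with i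
          exact hx i
      _ = c * (m : ℝ) ^ (1 / p.toReal) := by
          rw [sum_const, card_univ, Fintype.card_fin, nsmul_eq_mul,
            Real.mul_rpow (by positivity) (by positivity), ← Real.rpow_mul hc,
            mul_one_div_cancel hp_pos.ne', Real.rpow_one, mul_comm]

lemma pNorm_le_card_rpow_mul_pNorm {s t : ℝ≥0∞} (hs : s ≠ 0) (hst : s ≤ t) (ht : t ≠ ∞)
    (x : Fin m → ℝ) :
    pNorm s x ≤ (m : ℝ) ^ (1 / s.toReal - 1 / t.toReal) * pNorm t x := by
  have hs_top : s ≠ ∞ := ne_top_of_le_ne_top ht hst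
  have hs_pos : 0 < s.toReal := ENNReal.toReal_pos hs hs_top
  have hst' : s.toReal ≤ t.toReal := ENNReal.toReal_mono ht hst
  have ht_pos : 0 < t.toReal := hs_pos.trans_le hst'
  have hr : 1 ≤ t.toReal / s.toReal := (one_le_div hs_pos).2 hst'
  have hpow := Real.rpow_sum_le_const_mul_sum_rpow_of_nonneg univ hr
    (f := fun i => |x i| ^ s.toReal) fun i _ => by positivity
  simp only [← Real.rpow_mul (abs_nonneg _), mul_div_cancel₀ _ hs_pos.ne', card_univ,
    Fintype.card_fin] at hpow
  rw [pNorm_of_ne_top hs_top, pNorm_of_ne_top ht]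
  calc (∑ i, |x i| ^ s.toReal) ^ (1 / s.toReal)
      = ((∑ i, |x i| ^ s.toReal) ^ (t.toReal / s.toReal)) ^ (1 / t.toReal) := by
        rw [← Real.rpow_mul (by positivity)]
        field_simp
    _ ≤ ((m : ℝ) ^ (t.toReal / s.toReal - 1) * ∑ i, |x i| ^ t.toReal) ^ (1 / t.toReal) := by
        gcongr
    _ = (m : ℝ) ^ (1 / s.toReal - 1 / t.toReal) * (∑ i, |x i| ^ t.toReal) ^ (1 / t.toReal) := by
        rw [Real.mul_rpow (by positivity) (by positivity), ← Real.rpow_mul (by positivity)]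
        congr 2
        field_simp

lemma pNorm_le_of_mem_smul_pBall {p q : ℝ≥0∞} (hq : q ≠ 0) (hqp : q ≤ p) (hp : p ≠ ∞) {ν : ℝ}
    (hν : 0 ≤ ν) {x : Fin m → ℝ} (hx : x ∈ ν • pBall m p) :
    pNorm q x ≤ ν * (m : ℝ) ^ (1 / q.toReal - 1 / p.toReal) := by
  obtain ⟨u, hu, rfl⟩ := hx
  rw [pNorm_smul hq, abs_of_nonneg hν]
  gcongr
  calc pNorm q u ≤ (m : ℝ) ^ (1 / q.toReal - 1 / p.toReal) * pNorm p u :=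
        pNorm_le_card_rpow_mul_pNorm hq hqp hp u
    _ ≤ (m : ℝ) ^ (1 / q.toReal - 1 / p.toReal) := mul_le_of_le_one_right (by positivity) hu

lemma smul_pBall_top_subset_pBall {p : ℝ≥0∞} (hp : p ≠ 0) {c : ℝ} (hc : 0 ≤ c)
    (h : c * (m : ℝ) ^ (1 / p.toReal) ≤ 1) : c • pBall m ∞ ⊆ pBall m p := by
  rintro _ ⟨x, hx, rfl⟩
  refine (pNorm_le_of_forall_abs_le hp hc fun i => ?_).trans h
  simpa [abs_mul, abs_of_nonneg hc] using mul_le_mul_of_nonneg_left (mem_pBall_top.1 hx i) hc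

lemma smul_pBall_top_subset_inter {p₀ p₁ : ℝ≥0∞} (hp₀ : p₀ ≠ 0) (hp₁ : p₁ ≠ 0) (hm : 0 < m)
    {ν : ℝ} (hν : 0 ≤ ν) (hνm : ν ≤ (m : ℝ) ^ (1 / p₁.toReal - 1 / p₀.toReal)) :
    (ν * (m : ℝ) ^ (-(1 / p₁.toReal))) • pBall m ∞ ⊆ pBall m p₀ ∩ ν • pBall m p₁ := by
  have hm' : (0 : ℝ) < m := by exact_mod_cast hm
  refine Set.subset_inter (smul_pBall_top_subset_pBall hp₀ (by positivity) ?_) ?_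
  · calc ν * (m : ℝ) ^ (-(1 / p₁.toReal)) * (m : ℝ) ^ (1 / p₀.toReal)
        ≤ (m : ℝ) ^ (1 / p₁.toReal - 1 / p₀.toReal) * (m : ℝ) ^ (-(1 / p₁.toReal)) *
            (m : ℝ) ^ (1 / p₀.toReal) := by gcongr
      _ = 1 := by rw [← Real.rpow_add hm', ← Real.rpow_add hm']; ring_nf; exact Real.rpow_zero _
  · rw [mul_smul]
    refine Set.smul_set_mono (smul_pBall_top_subset_pBall hp₁ (by positivity) ?_)
    rw [← Real.rpow_add hm', neg_add_cancel, Real.rpow_zero]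

end pNorm

noncomputable def pInfDist {m : ℕ} (q : ℝ≥0∞) (L : Submodule ℝ (Fin m → ℝ)) (x : Fin m → ℝ) : ℝ :=
  ⨅ y : L, pNorm q (x - (y : Fin m → ℝ))

section kolWidth

variable {m n : ℕ} {q : ℝ≥0∞}

instance : Nonempty {L : Submodule ℝ (Fin m → ℝ) // finrank ℝ L ≤ n} := ⟨⟨⊥, by simp⟩⟩

lemma pInfDist_nonneg (L : Submodule ℝ (Fin m → ℝ)) (x : Fin m → ℝ) : 0 ≤ pInfDist q L x :=
  Real.iInf_nonneg fun _ => pNorm_nonneg _ _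

lemma pInfDist_le_pNorm (L : Submodule ℝ (Fin m → ℝ)) (x : Fin m → ℝ) :
    pInfDist q L x ≤ pNorm q x := by
  simpa [pInfDist] using ciInf_le (f := fun y : L => pNorm q (x - (y : Fin m → ℝ)))
    ⟨0, Set.forall_mem_range.2 fun _ => pNorm_nonneg _ _⟩ 0

lemma le_pInfDist {L : Submodule ℝ (Fin m → ℝ)} {x : Fin m → ℝ} {b : ℝ}
    (h : ∀ y ∈ L, b ≤ pNorm q (x - y)) : b ≤ pInfDist q L x :=
  le_ciInf fun y => h y y.2

lemma bddAbove_range_pInfDist {M : Set (Fin m → ℝ)} (hM : BddAbove (pNorm q '' M))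
    (L : Submodule ℝ (Fin m → ℝ)) :
    BddAbove (Set.range fun x : M => pInfDist q L (x : Fin m → ℝ)) := by
  obtain ⟨B, hB⟩ := hM
  exact ⟨B, Set.forall_mem_range.2 fun x => (pInfDist_le_pNorm _ _).trans (hB ⟨x, x.2, rfl⟩)⟩

lemma bddBelow_range_iSup_pInfDist (M : Set (Fin m → ℝ)) :
    BddBelow (Set.range fun L : {L : Submodule ℝ (Fin m → ℝ) // finrank ℝ L ≤ n} =>
      ⨆ x : M, pInfDist q (L : Submodule ℝ (Fin m → ℝ)) (x : Fin m → ℝ)) :=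
  ⟨0, Set.forall_mem_range.2 fun _ => Real.iSup_nonneg fun _ => pInfDist_nonneg _ _⟩

lemma kolWidth_le_of_forall_pNorm_le {M : Set (Fin m → ℝ)} {B : ℝ} (hB : 0 ≤ B)
    (h : ∀ x ∈ M, pNorm q x ≤ B) : kolWidth q n M ≤ B :=
  (ciInf_le (bddBelow_range_iSup_pInfDist M) ⟨⊥, by simp⟩).trans <|
    Real.iSup_le (fun x => (pInfDist_le_pNorm _ _).trans (h x x.2)) hB

lemma kolWidth_mono {M M' : Set (Fin m → ℝ)} (hM' : BddAbove (pNorm q '' M')) (h : M ⊆ M') :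
    kolWidth q n M ≤ kolWidth q n M' :=
  ciInf_mono (bddBelow_range_iSup_pInfDist M) fun L =>
    Real.iSup_le (fun x => le_ciSup (bddAbove_range_pInfDist hM' L) ⟨x, h x.2⟩)
      (Real.iSup_nonneg fun _ => pInfDist_nonneg _ _)

lemma le_kolWidth {M : Set (Fin m → ℝ)} (hM : BddAbove (pNorm q '' M)) {b : ℝ}
    (h : ∀ L : Submodule ℝ (Fin m → ℝ), finrank ℝ L ≤ n →
      ∃ x ∈ M, ∀ y ∈ L, b ≤ pNorm q (x - y)) :
    b ≤ kolWidth q n M := by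
  refine le_ciInf fun L => ?_
  obtain ⟨x, hxM, hx⟩ := h L.1 L.2
  exact (le_pInfDist hx).trans (le_ciSup (bddAbove_range_pInfDist hM L) ⟨x, hxM⟩)

end kolWidth

lemma exists_dotProduct_eq_zero_finrank_add_eq {K ι : Type*} [Field K] [Fintype ι]
    [DecidableEq ι] (L : Submodule K (ι → K)) :
    ∃ V : Submodule K (ι → K), (∀ z ∈ V, ∀ y ∈ L, y ⬝ᵥ z = 0) ∧
      finrank K L + finrank K V = Fintype.card ι := by
  refine ⟨L.dualAnnihilator.comap (dotProductEquiv K ι).toLinearMap, fun z hz y hy => ?_, ?_⟩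
  · rw [dotProduct_comm]
    exact (Submodule.mem_dualAnnihilator _).1 hz y hy
  · rw [Submodule.comap_equiv_eq_map_symm, LinearEquiv.finrank_map_eq,
      Subspace.finrank_add_finrank_dualAnnihilator_eq, finrank_fintype_fun_eq_card]

section Cube

variable {ι : Type*} [Fintype ι]

open scoped Classical in
noncomputable def unitCoords (z : ι → ℝ) : Finset ι := {i | |z i| = 1}

lemma mem_unitCoords {z : ι → ℝ} {i : ι} : i ∈ unitCoords z ↔ |z i| = 1 := by
  simp [unitCoords]

lemma exists_unitCoords_ssubset {V : Submodule ℝ (ι → ℝ)} {z : ι → ℝ} (hzV : z ∈ V)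
    (hz : ∀ i, |z i| ≤ 1) (hcard : #(unitCoords z) < finrank ℝ V) :
    ∃ z' ∈ V, (∀ i, |z' i| ≤ 1) ∧ unitCoords z ⊂ unitCoords z' := by
  classical
  set S := unitCoords z
  obtain ⟨w, hwV, hwS, hw0⟩ : ∃ w ∈ V, (∀ i ∈ S, w i = 0) ∧ w ≠ 0 := by
    let ρ : V →ₗ[ℝ] (S → ℝ) := LinearMap.pi fun i => (LinearMap.proj i.1).comp V.subtype
    obtain ⟨w, hw, hw0⟩ := (Submodule.ne_bot_iff _).1 <|
      LinearMap.ker_ne_bot_of_finrank_lt (f := ρ) (by simpa using hcard)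
    exact ⟨w, w.2, fun i hi => congrFun (LinearMap.mem_ker.1 hw) ⟨i, hi⟩, by simpa using hw0⟩
  obtain ⟨j, hj⟩ := Function.ne_iff.1 hw0
  have hjS : j ∉ S := fun h => hj (hwS j h)
  have hT : Sᶜ.Nonempty := ⟨j, mem_compl.2 hjS⟩
  set f : ℝ → ℝ := fun t => Sᶜ.sup' hT fun i => |z i + t * w i|
  have hf : Continuous f :=
    Continuous.finset_sup'_apply (f := fun i t => |z i + t * w i|) hT fun i _ => by fun_prop
  have hf0 : f 0 ≤ 1 := sup'_le _ _ fun i _ => by simpa using hz i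
  have hfT : 1 ≤ f (2 / |w j|) := by
    refine le_sup'_of_le _ (mem_compl.2 hjS) ?_
    have : |2 / |w j| * w j| = 2 := by
      rw [abs_mul, abs_div, abs_abs, abs_two, div_mul_cancel₀ _ (abs_ne_zero.2 hj)]
    have := abs_sub_abs_le_abs_add (2 / |w j| * w j) (z j)
    rw [add_comm] at this
    linarith [hz j]
  obtain ⟨t, -, ht⟩ := intermediate_value_Icc (by positivity) hf.continuousOn ⟨hf0, hfT⟩
  have hS : ∀ i ∈ S, (z + t • w) i = z i := fun i hi => by simp [hwS i hi]
  refine ⟨z + t • w, V.add_mem hzV (V.smul_mem t hwV), fun i => ?_, ?_⟩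
  · by_cases hi : i ∈ S
    · simpa [hS i hi] using hz i
    · simpa [← ht] using le_sup' (fun i => |z i + t * w i|) (mem_compl.2 hi)
  · have hsub : S ⊆ unitCoords (z + t • w) := fun i hi => by
      rw [mem_unitCoords, hS i hi]
      exact mem_unitCoords.1 hi
    obtain ⟨i₀, hi₀, hi₀t⟩ := exists_mem_eq_sup' hT fun i => |z i + t * w i|
    refine (ssubset_iff_of_subset hsub).2 ⟨i₀, ?_, mem_compl.1 hi₀⟩
    simpa [mem_unitCoords, ← hi₀t] using ht

lemma exists_mem_finrank_le_card_unitCoords (V : Submodule ℝ (ι → ℝ)) :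
    ∃ z ∈ V, (∀ i, |z i| ≤ 1) ∧ finrank ℝ V ≤ #(unitCoords z) := by
  suffices ∀ N ≤ finrank ℝ V, ∃ z ∈ V, (∀ i, |z i| ≤ 1) ∧ N ≤ #(unitCoords z) from
    this _ le_rfl
  intro N hN
  induction N with
  | zero => exact ⟨0, V.zero_mem, by simp, Nat.zero_le _⟩
  | succ N ih =>
    obtain ⟨z, hzV, hz, hNz⟩ := ih (by omega)
    rcases hNz.lt_or_eq with hlt | heq
    · exact ⟨z, hzV, hz, hlt⟩
    · obtain ⟨z', hz'V, hz', hss⟩ := exists_unitCoords_ssubset hzV hz (by omega)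
      exact ⟨z', hz'V, hz', by have := card_lt_card hss; omega⟩

lemma exists_mem_finrank_le_sum_abs (V : Submodule ℝ (ι → ℝ)) :
    ∃ z ∈ V, (∀ i, |z i| ≤ 1) ∧ (finrank ℝ V : ℝ) ≤ ∑ i, |z i| := by
  obtain ⟨z, hzV, hz, hcard⟩ := exists_mem_finrank_le_card_unitCoords V
  refine ⟨z, hzV, hz, ?_⟩
  calc (finrank ℝ V : ℝ) ≤ #(unitCoords z) := by exact_mod_cast hcard
    _ = ∑ i ∈ unitCoords z, |z i| := by
        rw [sum_congr rfl fun i hi => mem_unitCoords.1 hi]; simp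
    _ ≤ ∑ i, |z i| := sum_le_sum_of_subset_of_nonneg (subset_univ _) fun i _ _ => abs_nonneg _

end Cube

lemma le_kolWidth_smul_pBall_top {m n : ℕ} {q : ℝ≥0∞} (hq : 1 ≤ q) (hq_top : q ≠ ∞) (hm : 0 < m)
    (hn : 2 * n ≤ m) {c : ℝ} (hc : 0 ≤ c) :
    c * (m : ℝ) ^ (1 / q.toReal) / 2 ≤ kolWidth q n (c • pBall m ∞) := by
  have hq₀ : q ≠ 0 := (zero_lt_one.trans_le hq).ne'
  have hm' : (0 : ℝ) < m := by exact_mod_cast hm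
  have hbdd : BddAbove (pNorm q '' (c • pBall m ∞)) := by
    refine ⟨c * (m : ℝ) ^ (1 / q.toReal), Set.forall_mem_image.2 ?_⟩
    rintro _ ⟨x, hx, rfl⟩
    rw [pNorm_smul hq₀, abs_of_nonneg hc]
    simpa using mul_le_mul_of_nonneg_left
      (pNorm_le_of_forall_abs_le hq₀ zero_le_one (mem_pBall_top.1 hx)) hc
  refine le_kolWidth hbdd fun L hL => ?_
  obtain ⟨V, hVL, hV⟩ := exists_dotProduct_eq_zero_finrank_add_eq L
  obtain ⟨z, hzV, hz, hz_sum⟩ := exists_mem_finrank_le_sum_abs V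
  set x : Fin m → ℝ := c • fun i => (SignType.sign (z i) : ℝ)
  refine ⟨x, ⟨_, mem_pBall_top.2 fun i => ?_, rfl⟩, fun y hy => ?_⟩
  · rcases lt_trichotomy (z i) 0 with h | h | h <;> simp [h]
  have hm_sum : (m : ℝ) / 2 ≤ ∑ i, |z i| := by
    have : (m : ℝ) ≤ 2 * finrank ℝ V := by
      simp only [Fintype.card_fin] at hV
      exact_mod_cast (by omega : m ≤ 2 * finrank ℝ V)
    linarith
  have hpair : c * ∑ i, |z i| = (x - y) ⬝ᵥ z := by
    rw [sub_dotProduct, hVL z hzV y hy, sub_zero, smul_dotProduct, smul_eq_mul]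
    simp [dotProduct, sign_mul_self]
  have hl1 : (x - y) ⬝ᵥ z ≤ ∑ i, |(x - y) i| :=
    sum_le_sum fun i _ => (le_abs_self _).trans <| by
      rw [abs_mul]; exact mul_le_of_le_one_right (abs_nonneg _) (hz i)
  have hholder : ∑ i, |(x - y) i| ≤ (m : ℝ) ^ (1 - 1 / q.toReal) * pNorm q (x - y) := by
    simpa [pNorm_of_ne_top] using pNorm_le_card_rpow_mul_pNorm one_ne_zero hq hq_top (x - y)
  have hscale : (m : ℝ) ^ (1 - 1 / q.toReal) * (c * (m : ℝ) ^ (1 / q.toReal) / 2) =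
      c * ((m : ℝ) / 2) := by
    rw [mul_div_assoc', mul_left_comm, ← Real.rpow_add hm', sub_add_cancel, Real.rpow_one]
    ring
  refine le_of_mul_le_mul_left ?_ (by positivity : (0 : ℝ) < (m : ℝ) ^ (1 - 1 / q.toReal))
  rw [hscale]
  calc c * ((m : ℝ) / 2) ≤ c * ∑ i, |z i| := by gcongr
    _ ≤ _ := by rw [hpair]; exact hl1.trans hholder

theorem stmt16_general (p₀ p₁ q : ℝ≥0∞)
    (hq : 1 ≤ q) (hqp₁ : q ≤ p₁) (hp : p₁ < p₀) :
    ∃ c C : ℝ, 0 < c ∧ 0 < C ∧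
      ∀ (m k n : ℕ), 1 ≤ k → k ≤ m → 2 * n ≤ m →
        c * ((k : ℝ) ^ (1 / p₁.toReal - 1 / p₀.toReal) *
            (m : ℝ) ^ (1 / q.toReal - 1 / p₁.toReal)) ≤
          kolWidth q n (pBall m p₀ ∩
            ((k : ℝ) ^ (1 / p₁.toReal - 1 / p₀.toReal)) • pBall m p₁) ∧
        kolWidth q n (pBall m p₀ ∩
            ((k : ℝ) ^ (1 / p₁.toReal - 1 / p₀.toReal)) • pBall m p₁) ≤
          C * ((k : ℝ) ^ (1 / p₁.toReal - 1 / p₀.toReal) *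
            (m : ℝ) ^ (1 / q.toReal - 1 / p₁.toReal)) := by
  have hq₀ : q ≠ 0 := (zero_lt_one.trans_le hq).ne'
  have hp₁₀ : p₁ ≠ 0 := ne_bot_of_le_ne_bot hq₀ hqp₁
  have hp₁ : p₁ ≠ ∞ := hp.ne_top
  have hq_top : q ≠ ∞ := ne_top_of_le_ne_top hp₁ hqp₁
  have he : 0 ≤ 1 / p₁.toReal - 1 / p₀.toReal := by
    simpa only [sub_nonneg, one_div, ← ENNReal.toReal_inv] using
      ENNReal.toReal_mono (ENNReal.inv_ne_top.2 hp₁₀) (ENNReal.inv_le_inv.2 hp.le)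
  refine ⟨1 / 2, 1, by norm_num, one_pos, fun m k n hk hkm hn => ?_⟩
  set ν := (k : ℝ) ^ (1 / p₁.toReal - 1 / p₀.toReal)
  have hm : 0 < m := by omega
  have hν : 0 ≤ ν := by positivity
  have hνm : ν ≤ (m : ℝ) ^ (1 / p₁.toReal - 1 / p₀.toReal) :=
    Real.rpow_le_rpow (Nat.cast_nonneg k) (by exact_mod_cast hkm) he
  have hnorm : ∀ x ∈ pBall m p₀ ∩ ν • pBall m p₁,
      pNorm q x ≤ ν * (m : ℝ) ^ (1 / q.toReal - 1 / p₁.toReal) :=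
    fun x hx => pNorm_le_of_mem_smul_pBall hq₀ hqp₁ hp₁ hν hx.2
  refine ⟨?_, by simpa using kolWidth_le_of_forall_pNorm_le (by positivity) hnorm⟩
  calc 1 / 2 * (ν * (m : ℝ) ^ (1 / q.toReal - 1 / p₁.toReal))
      = ν * (m : ℝ) ^ (-(1 / p₁.toReal)) * (m : ℝ) ^ (1 / q.toReal) / 2 := by
        rw [sub_eq_neg_add, Real.rpow_add (by exact_mod_cast hm)]; ring
    _ ≤ kolWidth q n ((ν * (m : ℝ) ^ (-(1 / p₁.toReal))) • pBall m ∞) :=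
        le_kolWidth_smul_pBall_top hq hq_top hm hn (by positivity)
    _ ≤ kolWidth q n (pBall m p₀ ∩ ν • pBall m p₁) :=
        kolWidth_mono ⟨_, Set.forall_mem_image.2 hnorm⟩ <|
          smul_pBall_top_subset_inter (ne_bot_of_le_ne_bot hp₁₀ hp.le) hp₁₀ hm hν hνm

theorem stmt16 (p₀ p₁ q : ℝ≥0∞)
    (hq : 1 ≤ q) (hqp₁ : q ≤ p₁) (hp : p₁ < p₀) (hp₀ : p₀ ≤ ∞) :
    ∃ c C : ℝ, 0 < c ∧ 0 < C ∧
      ∀ (m k n : ℕ), 1 ≤ k → k ≤ m → 2 * n ≤ m →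
        c * ((k : ℝ) ^ (1 / p₁.toReal - 1 / p₀.toReal) *
            (m : ℝ) ^ (1 / q.toReal - 1 / p₁.toReal)) ≤
          kolWidth q n (pBall m p₀ ∩
            ((k : ℝ) ^ (1 / p₁.toReal - 1 / p₀.toReal)) • pBall m p₁) ∧
        kolWidth q n (pBall m p₀ ∩
            ((k : ℝ) ^ (1 / p₁.toReal - 1 / p₀.toReal)) • pBall m p₁) ≤
          C * ((k : ℝ) ^ (1 / p₁.toReal - 1 / p₀.toReal) *
            (m : ℝ) ^ (1 / q.toReal - 1 / p₁.toReal)) :=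
  stmt16_general p₀ p₁ q hq hqp₁ hp
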